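/- arXiv:2403.15844 — 2 statements merged into one kernel-verified Lean document; each statement's English description precedes it below -/
import Mathlib

section
/- Let {f_1, ..., f_n} be a d-sequence in a commutative ring A. Then for every integer s ≥ 1, the colon ideal (⟨f_1, ..., f_{n-1}⟩ : f_n^s) equals (⟨f_1, ..., f_{n-1}⟩ : f_n). -/
open Ideal

/-- A sequence `f 0, …, f n` is a *d-sequence* in `A` if
`(⟨f_0,…,f_{i-1}⟩ : f_i) ∩ ⟨f_0,…,f_n⟩ = ⟨f_0,…,f_{i-1}⟩` for every `i`. -/
def IsDSequence {A : Type*} [CommRing A] {n : ℕ} (f : Fin n → A) : Prop :=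
  ∀ i : Fin n,
    (Ideal.span (f '' {j | j < i})).colon (Ideal.span {f i}) ⊓ Ideal.span (Set.range f)
      = Ideal.span (f '' {j | j < i})

/-- If `f 0, …, f n` is a d-sequence in a commutative ring `A`, then for every `s ≥ 1`
`(⟨f_0,…,f_{n-1}⟩ : f_n ^ s) = (⟨f_0,…,f_{n-1}⟩ : f_n)`. -/
theorem colon_pow_eq_colon_of_isDSequence {A : Type*} [CommRing A] {n : ℕ}
    (f : Fin (n + 1) → A) (hf : IsDSequence f)
    (J : Ideal A) (hJ : J = Ideal.span (f '' {j | j < Fin.last n})) :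
    ∀ s : ℕ, 1 ≤ s →
      J.colon (Ideal.span {f (Fin.last n) ^ s}) = J.colon (Ideal.span {f (Fin.last n)}) := by
  set a := f (Fin.last n) with ha
  have key := hf (Fin.last n)
  rw [← hJ] at key
  intro s hs
  induction s with
  | zero => omega
  | succ s ih =>
    rcases Nat.eq_or_lt_of_le hs with h1 | h1
    · rw [← h1, pow_one]
    · have hs' : 1 ≤ s := by omega
      rw [← ih hs']
      apply le_antisymm
      · intro x hx
        rw [Ideal.mem_colon_span_singleton] at hx ⊢
        -- hx : x * a ^ (s + 1) ∈ J; show x * a ^ s ∈ J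
        have h1 : x * a ^ s ∈ J.colon (Ideal.span {a}) := by
          rw [Ideal.mem_colon_span_singleton]
          have : x * a ^ s * a = x * a ^ (s + 1) := by ring
          rwa [this]
        have h2 : x * a ^ s ∈ Ideal.span (Set.range f) := by
          have : x * a ^ s = (x * a ^ (s - 1)) * a := by
            rw [mul_assoc, ← pow_succ]
            congr 2
            omega
          rw [this]
          exact Ideal.mul_mem_left _ _
            (Ideal.subset_span ⟨Fin.last n, rfl⟩)
        have := key ▸ (Submodule.mem_inf.mpr ⟨h1, h2⟩)
        exact this
      · intro x hx
        rw [Ideal.mem_colon_span_singleton] at hx ⊢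
        have : x * a ^ (s + 1) = (x * a ^ s) * a := by ring
        rw [this]
        exact Ideal.mul_mem_right _ _ hx
end

section
/- Let {f_1, ..., f_n} be a d-sequence in a commutative ring A and let I = ⟨f_1, ..., f_n⟩. Then for all s ≥ 1 and all 1 ≤ i ≤ n, the colon ideal (⟨f_1, ..., f_{i-1}⟩ + I^s : f_i) equals (⟨f_1, ..., f_{i-1}⟩ : f_i) + I^{s-1}. -/
/-!
Write `K t = ⟨f_0, …, f_{t-1}⟩` and `I = K n`. The heart of the matter is the identity
`K m ∩ I ^ (k+1) = K m · I ^ k` for all `m ≤ n`, proved by induction on `k`. Granting it for `k`,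
the d-sequence condition turns it into `(K t : f_t) ∩ I ^ (k+1) = K t · I ^ k`; hence an element of
`K m ∩ K (t+1) · I ^ (k+1)` can be rewritten into `K m ∩ K t · I ^ (k+1)`, and letting `t` descend
from `n` to `m` gives the identity for `k + 1`. The colon formula for `s = k + 1` then only needs the
identity at `m = i + 1`: if `x f_i = j + w` with `j ∈ K i` and `w ∈ I ^ (k+1)`, then
`w ∈ K (i+1) · I ^ k`, so `w ≡ f_i c (mod K i)` with `c ∈ I ^ k` and `x - c ∈ (K i : f_i)`.
-/

open Ideal

namespace Ideal

variable {A : Type*} [CommRing A] {J I : Ideal A} {a : A} {k : ℕ}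

theorem inf_sup_span_singleton_mul_pow_le (ha : a ∈ I)
    (h : J.colon (span {a}) ⊓ I ^ (k + 1) ≤ J * I ^ k) :
    J ⊓ (J ⊔ span {a}) * I ^ (k + 1) ≤ J * I ^ (k + 1) := by
  rintro z ⟨hzJ, hz⟩
  rw [sup_mul] at hz
  obtain ⟨y, hy, w, hw, rfl⟩ := Submodule.mem_sup.mp hz
  obtain ⟨c, hc, rfl⟩ := mem_span_singleton_mul.mp hw
  have hcJ : c ∈ J.colon (span {a}) := by
    rw [mem_colon_span_singleton, mul_comm]
    exact (J.add_mem_iff_right (mul_le_left hy)).mp hzJ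
  have hac : a * c ∈ J * I ^ (k + 1) := by
    rw [pow_succ', mul_left_comm]
    exact mul_mem_mul ha (h ⟨hcJ, hc⟩)
  exact add_mem hy hac

theorem colon_sup_pow_succ_eq (ha : a ∈ I)
    (h : (J ⊔ span {a}) ⊓ I ^ (k + 1) ≤ (J ⊔ span {a}) * I ^ k) :
    (J + I ^ (k + 1)).colon (span {a}) = J.colon (span {a}) + I ^ k := by
  refine le_antisymm (fun x hx => ?_) (sup_le ?_ fun x hx => ?_)
  · obtain ⟨j, hj, w, hw, hjw⟩ := Submodule.mem_sup.mp (mem_colon_span_singleton.mp hx)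
    have hwJa : w ∈ J ⊔ span {a} := by
      rw [eq_sub_of_add_eq' hjw]
      exact sub_mem (mem_sup_right (mul_mem_left _ x (mem_span_singleton_self a)))
        (mem_sup_left hj)
    have hw' := h ⟨hwJa, hw⟩
    rw [sup_mul] at hw'
    obtain ⟨j', hj', w', hw'', rfl⟩ := Submodule.mem_sup.mp hw'
    obtain ⟨c, hc, rfl⟩ := mem_span_singleton_mul.mp hw''
    have hxc : x - c ∈ J.colon (span {a}) := by
      rw [mem_colon_span_singleton, sub_mul, ← hjw, mul_comm c a, add_sub_assoc,
        add_sub_cancel_right]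
      exact add_mem hj (mul_le_left hj')
    rw [add_eq_sup, ← sub_add_cancel x c]
    exact add_mem (mem_sup_left hxc) (mem_sup_right hc)
  · exact Submodule.colon_mono le_sup_left le_rfl
  · rw [mem_colon_span_singleton, pow_succ]
    exact mem_sup_right (mul_mem_mul hx ha)

end Ideal

section PrefixIdeal

variable {A : Type*} [CommRing A] {n : ℕ}

def prefixIdeal (f : Fin n → A) (t : ℕ) : Ideal A := span (f '' {j | (j : ℕ) < t})

theorem prefixIdeal_mono (f : Fin n → A) : Monotone (prefixIdeal f) :=
  fun _ _ h => span_mono (Set.image_mono fun _ hj => lt_of_lt_of_le hj h)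

theorem prefixIdeal_self (f : Fin n → A) : prefixIdeal f n = span (Set.range f) := by
  simp only [prefixIdeal, Fin.is_lt, Set.ofPred_true, Set.image_univ]

theorem prefixIdeal_succ (f : Fin n → A) (i : Fin n) :
    prefixIdeal f ((i : ℕ) + 1) = prefixIdeal f i ⊔ span {f i} := by
  have hset : {j : Fin n | (j : ℕ) < i + 1} = {j : Fin n | (j : ℕ) < i} ∪ {i} := by
    ext j
    simp only [Set.mem_ofPred_eq, Set.mem_union, Set.mem_singleton_iff, Fin.ext_iff,
      Nat.lt_succ_iff_lt_or_eq]
  rw [prefixIdeal, hset, Set.image_union, Set.image_singleton, span_union]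
  rfl

theorem IsDSequence.colon_inf_pow_succ_le {f : Fin n → A} (hf : IsDSequence f) (i : Fin n)
    {k : ℕ} (h : prefixIdeal f i ⊓ span (Set.range f) ^ (k + 1) ≤
      prefixIdeal f i * span (Set.range f) ^ k) :
    (prefixIdeal f i).colon (span {f i}) ⊓ span (Set.range f) ^ (k + 1) ≤
      prefixIdeal f i * span (Set.range f) ^ k := by
  have hdseq : (prefixIdeal f i).colon (span {f i}) ⊓ span (Set.range f) = prefixIdeal f i := hf i
  calc _ ≤ (prefixIdeal f i).colon (span {f i}) ⊓ span (Set.range f) ⊓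
        span (Set.range f) ^ (k + 1) :=
        le_inf (inf_le_inf_left _ (pow_le_self k.succ_ne_zero)) inf_le_right
    _ = prefixIdeal f i ⊓ span (Set.range f) ^ (k + 1) := by rw [hdseq]
    _ ≤ _ := h

theorem IsDSequence.prefixIdeal_inf_pow_succ_le {f : Fin n → A} (hf : IsDSequence f) (k : ℕ)
    {m : ℕ} (hm : m ≤ n) :
    prefixIdeal f m ⊓ span (Set.range f) ^ (k + 1) ≤ prefixIdeal f m * span (Set.range f) ^ k := by
  induction k generalizing m with
  | zero => simpa only [pow_zero, one_eq_top, mul_top] using inf_le_left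
  | succ k ih =>
    set I := span (Set.range f)
    suffices descend : ∀ t, m ≤ t → t ≤ n →
        prefixIdeal f m ⊓ prefixIdeal f t * I ^ (k + 1) ≤ prefixIdeal f m * I ^ (k + 1) by
      simpa only [I, prefixIdeal_self, ← pow_succ'] using descend n hm le_rfl
    intro t hmt
    induction t, hmt using Nat.le_induction with
    | base => exact fun _ => inf_le_right
    | succ t hmt iht =>
      intro htn
      let i : Fin n := ⟨t, htn⟩
      have hstep : prefixIdeal f t ⊓ prefixIdeal f (t + 1) * I ^ (k + 1) ≤
          prefixIdeal f t * I ^ (k + 1) := by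
        rw [show t + 1 = (i : ℕ) + 1 from rfl, prefixIdeal_succ]
        exact inf_sup_span_singleton_mul_pow_le (subset_span (Set.mem_range_self i))
          (hf.colon_inf_pow_succ_le i (ih (Nat.le_of_succ_le htn)))
      calc _ ≤ prefixIdeal f m ⊓ (prefixIdeal f t ⊓ prefixIdeal f (t + 1) * I ^ (k + 1)) :=
            le_inf inf_le_left (le_inf (inf_le_left.trans (prefixIdeal_mono f hmt)) inf_le_right)
        _ ≤ prefixIdeal f m ⊓ prefixIdeal f t * I ^ (k + 1) := inf_le_inf_left _ hstep
        _ ≤ _ := iht (Nat.le_of_succ_le htn)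

end PrefixIdeal

/-- If `f 0, …, f (n-1)` is a d-sequence in a commutative ring `A` and `I = ⟨f_0,…,f_{n-1}⟩`,
then for all `s ≥ 1` and all `i`,
`(⟨f_0,…,f_{i-1}⟩ + I ^ s : f_i) = (⟨f_0,…,f_{i-1}⟩ : f_i) + I ^ (s - 1)`. -/
theorem colon_add_pow_of_isDSequence {A : Type*} [CommRing A] {n : ℕ}
    (f : Fin n → A) (hf : IsDSequence f)
    (I : Ideal A) (hI : I = Ideal.span (Set.range f)) :
    ∀ s : ℕ, 1 ≤ s → ∀ i : Fin n,
      (Ideal.span (f '' {j | j < i}) + I ^ s).colon (Ideal.span {f i})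
        = (Ideal.span (f '' {j | j < i})).colon (Ideal.span {f i}) + I ^ (s - 1) := by
  intro s hs i
  obtain ⟨k, rfl⟩ := Nat.exists_eq_add_of_le' hs
  subst hI
  have key := hf.prefixIdeal_inf_pow_succ_le k (m := (i : ℕ) + 1) i.isLt
  rw [prefixIdeal_succ] at key
  exact colon_sup_pow_succ_eq (subset_span (Set.mem_range_self i)) key
end
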